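/- For 4 ≤ r ≤ 8, every ruling D in ℤ^{r+1} admits exactly r - 1 distinct unordered decompositions D = E + F into pairs of exceptional classes with (E,F) = 1. -/

import Mathlib

/-- The Del Pezzo intersection form on `ℤ^{r+1}`: `(l_0,l_0)=1`, `(l_i,l_i)=-1` for `i ≥ 1`,
`(l_i,l_j)=0` for `i ≠ j`. -/
def dpB {r : ℕ} (x y : Fin (r + 1) → ℤ) : ℤ :=
  x 0 * y 0 - ∑ i : Fin r, x i.succ * y i.succ

/-- The anticanonical class `-K = 3 l_0 - l_1 - ⋯ - l_r`. -/
def negK {r : ℕ} : Fin (r + 1) → ℤ := fun i => if i = 0 then 3 else -1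

/-- The standard basis vector `l_i`. -/
def l {r : ℕ} (i : Fin (r + 1)) : Fin (r + 1) → ℤ := fun j => if j = i then 1 else 0

/-- An exceptional class: `(E,E) = -1` and `(E,-K) = 1`. -/
def IsExc {r : ℕ} (E : Fin (r + 1) → ℤ) : Prop := dpB E E = -1 ∧ dpB E negK = 1

/-- A root: `(α,α) = -2` and `(α,-K) = 0`. -/
def IsRoot {r : ℕ} (a : Fin (r + 1) → ℤ) : Prop := dpB a a = -2 ∧ dpB a negK = 0

/-- A ruling: `(D,D) = 0` and `(D,-K) = 2`. -/
def IsRuling {r : ℕ} (D : Fin (r + 1) → ℤ) : Prop := dpB D D = 0 ∧ dpB D negK = 2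

/-- The reflection `σ_α(x) = x + (x,α) α`. -/
def reflct {r : ℕ} (a x : Fin (r + 1) → ℤ) : Fin (r + 1) → ℤ :=
  fun i => x i + dpB x a * a i

/-! Reflections `σ_α` in roots are isometries fixing `-K`, so they permute exceptional classes and
rulings and carry the decompositions of `D` bijectively onto those of `σ_α D`. If `D 0 ≥ 2`, the
root `α = l₀ - lᵢ - lⱼ - lₖ` built on the three largest multiplicities `-D i` satisfies
`(D, α) < 0` when `r ≤ 8`, so `σ_α` lowers the degree `D 0`; and `D 0 > 0` by
Cauchy–Schwarz. Descending, we reach `D 0 = 1`, i.e. `D = l₀ - lⱼ`. There a decomposition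
`{E, D - E}` has one member with vanishing `l₀`-coordinate, which must be some `lᵢ` with `i ≠ j`,
giving `r - 1` decompositions. -/

variable {r : ℕ}

lemma dpB_comm (x y : Fin (r + 1) → ℤ) : dpB x y = dpB y x := by
  simp only [dpB, mul_comm]

lemma dpB_add_left (x y z : Fin (r + 1) → ℤ) : dpB (x + y) z = dpB x z + dpB y z := by
  simp only [dpB, Pi.add_apply, add_mul, Finset.sum_add_distrib]; ring

lemma dpB_sub_left (x y z : Fin (r + 1) → ℤ) : dpB (x - y) z = dpB x z - dpB y z := by
  simp only [dpB, Pi.sub_apply, sub_mul, Finset.sum_sub_distrib]; ring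

lemma dpB_smul_left (c : ℤ) (x y : Fin (r + 1) → ℤ) : dpB (c • x) y = c * dpB x y := by
  simp only [dpB, Pi.smul_apply, smul_eq_mul, mul_assoc, ← Finset.mul_sum]; ring

lemma dpB_sub_right (x y z : Fin (r + 1) → ℤ) : dpB x (y - z) = dpB x y - dpB x z := by
  rw [dpB_comm, dpB_sub_left, dpB_comm y, dpB_comm z]

lemma dpB_self (x : Fin (r + 1) → ℤ) : dpB x x = x 0 ^ 2 - ∑ i : Fin r, x i.succ ^ 2 := by
  simp only [dpB, sq]

lemma dpB_negK (x : Fin (r + 1) → ℤ) : dpB x negK = 3 * x 0 + ∑ i : Fin r, x i.succ := by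
  simp [dpB, negK, Fin.succ_ne_zero, mul_comm]

lemma dpB_l_zero_left (x : Fin (r + 1) → ℤ) : dpB (l 0) x = x 0 := by
  simp [dpB, l, Fin.succ_ne_zero]

lemma dpB_l_succ_left (i : Fin r) (x : Fin (r + 1) → ℤ) : dpB (l i.succ) x = -x i.succ := by
  simp [dpB, l, (Fin.succ_ne_zero i).symm]

lemma isExc_l_succ (i : Fin r) : IsExc (l i.succ) := by
  simp [IsExc, dpB_l_succ_left, l, negK, Fin.succ_ne_zero]

lemma l_injective : Function.Injective (l (r := r)) := by
  intro i j h
  simpa [l] using congrFun h i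

section Reflection

variable {a : Fin (r + 1) → ℤ}

lemma reflct_eq (a x : Fin (r + 1) → ℤ) : reflct a x = x + dpB x a • a := rfl

lemma dpB_reflct_left (a x y : Fin (r + 1) → ℤ) :
    dpB (reflct a x) y = dpB x y + dpB x a * dpB a y := by
  rw [reflct_eq, dpB_add_left, dpB_smul_left]

lemma dpB_reflct_reflct (ha : dpB a a = -2) (x y : Fin (r + 1) → ℤ) :
    dpB (reflct a x) (reflct a y) = dpB x y := by
  rw [dpB_reflct_left, dpB_comm x, dpB_comm a, dpB_reflct_left, dpB_reflct_left, ha,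
    dpB_comm y x, dpB_comm a x]
  ring

lemma reflct_reflct (ha : dpB a a = -2) (x : Fin (r + 1) → ℤ) : reflct a (reflct a x) = x := by
  rw [reflct_eq a (reflct a x), dpB_reflct_left, ha, reflct_eq]
  ext i
  simp only [Pi.add_apply, Pi.smul_apply, smul_eq_mul]
  ring

lemma reflct_add (a x y : Fin (r + 1) → ℤ) : reflct a (x + y) = reflct a x + reflct a y := by
  simp only [reflct_eq, dpB_add_left, add_smul]; abel

lemma reflct_negK (ha : IsRoot a) : reflct a negK = negK := by
  rw [reflct_eq, dpB_comm, ha.2, zero_smul, add_zero]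

lemma dpB_reflct_negK (ha : IsRoot a) (x : Fin (r + 1) → ℤ) :
    dpB (reflct a x) negK = dpB x negK := by
  conv_lhs => rw [← reflct_negK ha]
  exact dpB_reflct_reflct ha.1 x negK

lemma isExc_reflct (ha : IsRoot a) {E : Fin (r + 1) → ℤ} (hE : IsExc E) : IsExc (reflct a E) :=
  ⟨(dpB_reflct_reflct ha.1 E E).trans hE.1, (dpB_reflct_negK ha E).trans hE.2⟩

lemma isRuling_reflct (ha : IsRoot a) {D : Fin (r + 1) → ℤ} (hD : IsRuling D) :
    IsRuling (reflct a D) :=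
  ⟨(dpB_reflct_reflct ha.1 D D).trans hD.1, (dpB_reflct_negK ha D).trans hD.2⟩

end Reflection

def exceptionalDecomps (D : Fin (r + 1) → ℤ) : Set (Set (Fin (r + 1) → ℤ)) :=
  {s | ∃ E F : Fin (r + 1) → ℤ, IsExc E ∧ IsExc F ∧ dpB E F = 1 ∧ E + F = D ∧ s = {E, F}}

lemma exceptionalDecomps_reflct {a : Fin (r + 1) → ℤ} (ha : IsRoot a) (D : Fin (r + 1) → ℤ) :
    exceptionalDecomps (reflct a D) = Set.image (reflct a) '' exceptionalDecomps D := by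
  ext s
  constructor
  · rintro ⟨E, F, hE, hF, hEF, hsum, rfl⟩
    refine ⟨{reflct a E, reflct a F}, ⟨reflct a E, reflct a F, isExc_reflct ha hE,
      isExc_reflct ha hF, (dpB_reflct_reflct ha.1 E F).trans hEF, ?_, rfl⟩, ?_⟩
    · rw [← reflct_add, hsum, reflct_reflct ha.1]
    · rw [Set.image_pair, reflct_reflct ha.1, reflct_reflct ha.1]
  · rintro ⟨_, ⟨E, F, hE, hF, hEF, rfl, rfl⟩, rfl⟩
    exact ⟨reflct a E, reflct a F, isExc_reflct ha hE, isExc_reflct ha hF,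
      (dpB_reflct_reflct ha.1 E F).trans hEF, (reflct_add a E F).symm, Set.image_pair _ _ _⟩

lemma ncard_exceptionalDecomps_reflct {a : Fin (r + 1) → ℤ} (ha : IsRoot a)
    (D : Fin (r + 1) → ℤ) :
    (exceptionalDecomps (reflct a D)).ncard = (exceptionalDecomps D).ncard := by
  rw [exceptionalDecomps_reflct ha]
  exact Set.ncard_image_of_injective _
    (Set.image_injective.mpr (Function.LeftInverse.injective (reflct_reflct ha.1)))

lemma IsRuling.isExc_sub {D E : Fin (r + 1) → ℤ} (hD : IsRuling D) (hE : IsExc E)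
    (hDE : dpB D E = 0) : IsExc (D - E) := by
  constructor
  · rw [dpB_sub_left, dpB_sub_right, dpB_sub_right, hD.1, hDE, dpB_comm E D, hDE, hE.1]; ring
  · rw [dpB_sub_left, hD.2, hE.2]; ring

lemma IsRuling.exceptionalDecomps_eq {D : Fin (r + 1) → ℤ} (hD : IsRuling D) :
    exceptionalDecomps D = (fun E => {E, D - E}) '' {E | IsExc E ∧ dpB D E = 0} := by
  ext s
  constructor
  · rintro ⟨E, F, hE, hF, hEF, rfl, rfl⟩
    refine ⟨E, ⟨hE, ?_⟩, by simp⟩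
    rw [dpB_add_left, hE.1, dpB_comm, hEF]; ring
  · rintro ⟨E, ⟨hE, hDE⟩, rfl⟩
    refine ⟨E, D - E, hE, hD.isExc_sub hE hDE, ?_, add_sub_cancel E D, rfl⟩
    rw [dpB_sub_right, dpB_comm, hDE, hE.1]; ring

lemma IsExc.sum_sq {E : Fin (r + 1) → ℤ} (hE : IsExc E) :
    ∑ i : Fin r, E i.succ ^ 2 = E 0 ^ 2 + 1 := by
  linarith [hE.1, dpB_self E]

lemma IsExc.sum {E : Fin (r + 1) → ℤ} (hE : IsExc E) : ∑ i : Fin r, E i.succ = 1 - 3 * E 0 := by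
  linarith [hE.2, dpB_negK E]

lemma IsRuling.sum_sq {D : Fin (r + 1) → ℤ} (hD : IsRuling D) :
    ∑ i : Fin r, D i.succ ^ 2 = D 0 ^ 2 := by
  linarith [hD.1, dpB_self D]

lemma IsRuling.sum {D : Fin (r + 1) → ℤ} (hD : IsRuling D) :
    ∑ i : Fin r, D i.succ = 2 - 3 * D 0 := by
  linarith [hD.2, dpB_negK D]

lemma Int.exists_forall_ne_eq_zero_of_sum_sq_eq_one {ι : Type*} [Fintype ι] {f : ι → ℤ}
    (h : ∑ i, f i ^ 2 = 1) : ∃ i, ∀ k ≠ i, f k = 0 := by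
  classical
  obtain ⟨i, -, hi⟩ : ∃ i ∈ Finset.univ, f i ≠ 0 := by
    by_contra! h0
    simp [h0] at h
  have hrest : ∑ k ∈ Finset.univ.erase i, f k ^ 2 = 0 := by
    have := Finset.add_sum_erase Finset.univ (fun k => f k ^ 2) (Finset.mem_univ i)
    have := Int.one_le_abs hi
    nlinarith [sq_abs (f i), Finset.sum_nonneg (fun k (_ : k ∈ Finset.univ.erase i) =>
      sq_nonneg (f k))]
  refine ⟨i, fun k hk => ?_⟩
  have := (Finset.sum_eq_zero_iff_of_nonneg (fun k _ => sq_nonneg (f k))).mp hrest k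
    (Finset.mem_erase.mpr ⟨hk, Finset.mem_univ k⟩)
  exact pow_eq_zero_iff two_ne_zero |>.mp this

lemma exists_eq_smul_l_zero_add_smul_l_succ {x : Fin (r + 1) → ℤ}
    (h : ∑ i : Fin r, x i.succ ^ 2 = 1) :
    ∃ i : Fin r, x = x 0 • l 0 + (∑ k : Fin r, x k.succ) • l i.succ := by
  obtain ⟨i, hi⟩ := Int.exists_forall_ne_eq_zero_of_sum_sq_eq_one h
  refine ⟨i, ?_⟩
  rw [Fintype.sum_eq_single i hi]
  ext w
  cases w using Fin.cases with
  | zero => simp [l, (Fin.succ_ne_zero i).symm]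
  | succ k =>
    by_cases hk : k = i
    · simp [l, hk, Fin.succ_ne_zero]
    · simp [l, hk, hi k hk, Fin.succ_ne_zero]

lemma IsExc.exists_eq_l_succ {E : Fin (r + 1) → ℤ} (hE : IsExc E) (h0 : E 0 = 0) :
    ∃ i : Fin r, E = l i.succ := by
  obtain ⟨i, hi⟩ := exists_eq_smul_l_zero_add_smul_l_succ (by rw [hE.sum_sq, h0]; ring)
  exact ⟨i, by rw [hi, hE.sum, h0]; simp⟩

lemma IsRuling.exists_eq_l_zero_sub_l_succ {D : Fin (r + 1) → ℤ} (hD : IsRuling D)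
    (h0 : D 0 = 1) : ∃ j : Fin r, D = l 0 - l j.succ := by
  obtain ⟨j, hj⟩ := exists_eq_smul_l_zero_add_smul_l_succ (by rw [hD.sum_sq, h0]; ring)
  exact ⟨j, by rw [hj, hD.sum, h0]; simp [sub_eq_add_neg]⟩

lemma IsExc.apply_zero_eq_zero_or_one {j : Fin r} {E : Fin (r + 1) → ℤ} (hE : IsExc E)
    (hDE : dpB (l 0 - l j.succ) E = 0) : E 0 = 0 ∨ E 0 = 1 := by
  rw [dpB_sub_left, dpB_l_zero_left, dpB_l_succ_left] at hDE
  have hsq := Finset.add_sum_erase Finset.univ (fun i : Fin r => E i.succ ^ 2) (Finset.mem_univ j)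
  have hsum := Finset.add_sum_erase Finset.univ (fun i : Fin r => E i.succ) (Finset.mem_univ j)
  rw [hE.sum_sq] at hsq
  rw [hE.sum] at hsum
  -- `|1 - 2 E 0| = |∑_{i ≠ j} E i| ≤ ∑_{i ≠ j} E i ^ 2 = 1`, as `|x| ≤ x ^ 2` on `ℤ`
  have hle := Finset.sum_le_sum fun i (_ : i ∈ Finset.univ.erase j) => Int.le_self_sq (E i.succ)
  have hge := Finset.sum_le_sum fun i (_ : i ∈ Finset.univ.erase j) => Int.le_self_sq (-E i.succ)
  simp only [neg_sq, Finset.sum_neg_distrib] at hge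
  have : E j.succ = -E 0 := by linarith
  rw [this] at hsq hsum
  have : 0 ≤ E 0 := by nlinarith
  have : E 0 ≤ 1 := by nlinarith
  omega

section BaseCase

variable (j : Fin r)

lemma dpB_l_zero_sub_l_succ (x : Fin (r + 1) → ℤ) :
    dpB (l 0 - l j.succ) x = x 0 + x j.succ := by
  rw [dpB_sub_left, dpB_l_zero_left, dpB_l_succ_left]; ring

lemma dpB_l_zero_sub_l_succ_l_succ_eq_zero_iff {i : Fin r} :
    dpB (l 0 - l j.succ) (l i.succ) = 0 ↔ i ≠ j := by
  simp [dpB_l_zero_sub_l_succ, l, Fin.succ_ne_zero, eq_comm]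

lemma isRuling_l_zero_sub_l_succ : IsRuling (l 0 - l j.succ) := by
  simp [IsRuling, dpB_l_zero_sub_l_succ, dpB_negK, l, (Fin.succ_ne_zero j).symm]

lemma exceptionalDecomps_l_zero_sub_l_succ :
    exceptionalDecomps (l 0 - l j.succ) =
      (fun i : Fin r => {l i.succ, l 0 - l j.succ - l i.succ}) '' {j}ᶜ := by
  have hD := isRuling_l_zero_sub_l_succ j
  rw [hD.exceptionalDecomps_eq]
  ext s
  constructor
  · rintro ⟨E, ⟨hE, hDE⟩, rfl⟩
    rcases hE.apply_zero_eq_zero_or_one hDE with hE0 | hE0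
    · obtain ⟨i, rfl⟩ := hE.exists_eq_l_succ hE0
      exact ⟨i, (dpB_l_zero_sub_l_succ_l_succ_eq_zero_iff j).mp hDE, rfl⟩
    · have hF := hD.isExc_sub hE hDE
      obtain ⟨i, hi⟩ := hF.exists_eq_l_succ (by simp [l, hE0, (Fin.succ_ne_zero j).symm])
      have hDF : dpB (l 0 - l j.succ) (l 0 - l j.succ - E) = 0 := by
        rw [dpB_sub_right, hD.1, hDE, sub_zero]
      rw [hi, dpB_l_zero_sub_l_succ_l_succ_eq_zero_iff] at hDF
      refine ⟨i, hDF, ?_⟩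
      simp only [← hi, sub_sub_cancel, Set.pair_comm]
  · rintro ⟨i, hi, rfl⟩
    exact ⟨l i.succ, ⟨isExc_l_succ i, (dpB_l_zero_sub_l_succ_l_succ_eq_zero_iff j).mpr hi⟩, rfl⟩

lemma ncard_exceptionalDecomps_l_zero_sub_l_succ :
    (exceptionalDecomps (l 0 - l j.succ)).ncard = r - 1 := by
  have hinj : Function.Injective
      fun i : Fin r => ({l i.succ, l 0 - l j.succ - l i.succ} : Set (Fin (r + 1) → ℤ)) := by
    intro a b hab
    rcases Set.pair_eq_pair_iff.mp hab with ⟨h, -⟩ | ⟨h, -⟩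
    · exact Fin.succ_injective _ (l_injective h)
    · simpa [l, Fin.succ_ne_zero, (Fin.succ_ne_zero _).symm] using congrFun h 0
  rw [exceptionalDecomps_l_zero_sub_l_succ, Set.ncard_image_of_injective _ hinj, Set.ncard_compl,
    Set.ncard_singleton, Nat.card_eq_fintype_card, Fintype.card_fin]

end BaseCase

lemma IsRuling.apply_zero_pos {D : Fin (r + 1) → ℤ} (hD : IsRuling D) (hr : r ≤ 8) : 0 < D 0 := by
  have hcs := sq_sum_le_card_mul_sum_sq (s := Finset.univ) (f := fun i : Fin r => D i.succ)
  rw [hD.sum, hD.sum_sq, Finset.card_univ, Fintype.card_fin] at hcs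
  have : (r : ℤ) ≤ 8 := by exact_mod_cast hr
  nlinarith [sq_nonneg (D 0)]

lemma IsRuling.apply_succ_nonpos {D : Fin (r + 1) → ℤ} (hD : IsRuling D) (hr : r ≤ 8)
    (j : Fin r) : D j.succ ≤ 0 := by
  have hsq := Finset.add_sum_erase Finset.univ (fun i : Fin r => D i.succ ^ 2) (Finset.mem_univ j)
  have hsum := Finset.add_sum_erase Finset.univ (fun i : Fin r => D i.succ) (Finset.mem_univ j)
  have hcs := sq_sum_le_card_mul_sum_sq (s := Finset.univ.erase j) (f := fun i : Fin r => D i.succ)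
  rw [Finset.card_erase_of_mem (Finset.mem_univ j), Finset.card_univ, Fintype.card_fin] at hcs
  rw [hD.sum_sq] at hsq
  rw [hD.sum] at hsum
  have h7 : ((r - 1 : ℕ) : ℤ) ≤ 7 := by omega
  have hcs7 := hcs.trans (mul_le_mul_of_nonneg_right h7
    (Finset.sum_nonneg fun i _ => sq_nonneg (D i.succ)))
  rw [show ∑ i ∈ Finset.univ.erase j, D i.succ = 2 - 3 * D 0 - D j.succ by linarith,
    show ∑ i ∈ Finset.univ.erase j, D i.succ ^ 2 = D 0 ^ 2 - D j.succ ^ 2 by linarith] at hcs7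
  by_contra! hj
  -- `d = D 0`, `t = D j.succ`: `(2 - 3 d - t) ^ 2 ≤ 7 (d ^ 2 - t ^ 2)` fails for `t ≥ 1`
  nlinarith [sq_nonneg (2 * D 0 + 3 * D j.succ - 6), mul_nonneg (by omega : (0 : ℤ) ≤ D j.succ - 1)
    (by omega : (0 : ℤ) ≤ D j.succ + 5)]

/-- Intended for `a ≥ b ≥ c` the three largest of at most eight nonnegative integers with sum
`3d - 2` and sum of squares `d ^ 2`, `S` and `Q` being the sum and the sum of squares of the
others. -/
lemma lt_add_add_of_sum_eq {a b c d S Q : ℤ} (hba : b ≤ a) (hcb : c ≤ b) (hQ : Q ≤ c * S)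
    (hS : S ≤ 5 * c) (hsum : a + b + c + S = 3 * d - 2) (hsq : a ^ 2 + b ^ 2 + c ^ 2 + Q = d ^ 2)
    (hd : 2 ≤ d) : d < a + b + c := by
  by_contra! h
  have hc : 1 ≤ c := by omega
  nlinarith [mul_nonneg (sub_nonneg.mpr (hcb.trans hba)) (sub_nonneg.mpr hcb),
    mul_nonneg (sub_nonneg.mpr h) (by omega : (0 : ℤ) ≤ d + (a + b + c) - 5 * c),
    mul_pos (by omega : (0 : ℤ) < c) (by omega : (0 : ℤ) < d - 3 * c + 1)]

lemma exists_lt_add_add_of_sum_eq {ι : Type*} [Fintype ι] {m : ι → ℤ} {d : ℤ}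
    (hcard : Fintype.card ι ≤ 8) (hm : ∀ i, 0 ≤ m i) (hsum : ∑ i, m i = 3 * d - 2)
    (hsq : ∑ i, m i ^ 2 = d ^ 2) (hd : 2 ≤ d) :
    ∃ i j k, i ≠ j ∧ i ≠ k ∧ j ≠ k ∧ d < m i + m j + m k := by
  classical
  have h3 : 3 ≤ Fintype.card ι := by
    have hcs := sq_sum_le_card_mul_sum_sq (s := Finset.univ) (f := m)
    rw [hsum, hsq, Finset.card_univ] at hcs
    by_contra! h
    have : (Fintype.card ι : ℤ) ≤ 2 := by omega
    nlinarith
  obtain ⟨i, hi, hmax_i⟩ := Finset.exists_max_image Finset.univ m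
    (Finset.card_pos.mp (by rw [Finset.card_univ]; omega))
  obtain ⟨j, hj, hmax_j⟩ := Finset.exists_max_image (Finset.univ.erase i) m
    (Finset.card_pos.mp (by rw [Finset.card_erase_of_mem hi, Finset.card_univ]; omega))
  have hcard_ij : 0 < ((Finset.univ.erase i).erase j).card := by
    rw [Finset.card_erase_of_mem hj, Finset.card_erase_of_mem hi, Finset.card_univ]; omega
  obtain ⟨k, hk, hmax_k⟩ := Finset.exists_max_image _ m (Finset.card_pos.mp hcard_ij)
  have hji := Finset.ne_of_mem_erase hj
  have hkj := Finset.ne_of_mem_erase hk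
  have hki := Finset.ne_of_mem_erase (Finset.mem_of_mem_erase hk)
  set R := ((Finset.univ.erase i).erase j).erase k
  have hsplit (f : ι → ℤ) : ∑ t, f t = f i + f j + f k + ∑ t ∈ R, f t := by
    rw [← Finset.add_sum_erase _ _ hi, ← Finset.add_sum_erase _ _ hj,
      ← Finset.add_sum_erase _ _ hk]
    ring
  have hR (t : ι) (ht : t ∈ R) : m t ≤ m k := hmax_k t (Finset.mem_of_mem_erase ht)
  have hcardR : R.card ≤ 5 := by
    rw [Finset.card_erase_of_mem hk, Finset.card_erase_of_mem hj, Finset.card_erase_of_mem hi,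
      Finset.card_univ]
    omega
  refine ⟨i, j, k, hji.symm, hki.symm, hkj.symm, lt_add_add_of_sum_eq
    (hmax_i j (Finset.mem_univ j)) (hmax_j k (Finset.mem_of_mem_erase hk)) ?_ ?_
    ((hsplit m).symm.trans hsum) ((hsplit (m · ^ 2)).symm.trans hsq) hd⟩
  · rw [Finset.mul_sum]
    exact Finset.sum_le_sum fun t ht => by
      rw [sq]; exact mul_le_mul_of_nonneg_right (hR t ht) (hm t)
  · calc ∑ t ∈ R, m t ≤ ∑ _t ∈ R, m k := Finset.sum_le_sum hR
      _ = R.card * m k := by rw [Finset.sum_const, nsmul_eq_mul]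
      _ ≤ 5 * m k := mul_le_mul_of_nonneg_right (by exact_mod_cast hcardR) (hm k)

lemma isRoot_l_zero_sub_l_succ_sub_l_succ_sub_l_succ {i j k : Fin r} (hij : i ≠ j) (hik : i ≠ k)
    (hjk : j ≠ k) : IsRoot (l 0 - l i.succ - l j.succ - l k.succ) := by
  simp [IsRoot, dpB_sub_left, dpB_l_zero_left, dpB_l_succ_left, dpB_negK, l,
    Fin.succ_ne_zero, (Fin.succ_ne_zero _).symm, hij, hik, hjk, hij.symm, hik.symm, hjk.symm]

lemma IsRuling.exists_isRoot_reflct_apply_zero_lt {D : Fin (r + 1) → ℤ} (hD : IsRuling D)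
    (hr : r ≤ 8) (hD0 : 2 ≤ D 0) : ∃ a, IsRoot a ∧ reflct a D 0 < D 0 := by
  obtain ⟨i, j, k, hij, hik, hjk, hlt⟩ := exists_lt_add_add_of_sum_eq (m := fun i => -D i.succ)
    (by simpa using hr) (fun i => neg_nonneg.mpr (hD.apply_succ_nonpos hr i))
    (by rw [Finset.sum_neg_distrib, hD.sum]; ring) (by simpa using hD.sum_sq) hD0
  refine ⟨_, isRoot_l_zero_sub_l_succ_sub_l_succ_sub_l_succ hij hik hjk, ?_⟩
  simp [reflct, dpB_comm D, dpB_sub_left, dpB_l_zero_left, dpB_l_succ_left, l,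
    (Fin.succ_ne_zero _).symm]
  linarith

theorem IsRuling.ncard_exceptionalDecomps {D : Fin (r + 1) → ℤ} (hD : IsRuling D) (hr : r ≤ 8) :
    (exceptionalDecomps D).ncard = r - 1 := by
  have hpos := hD.apply_zero_pos hr
  obtain hD0 | hD0 : D 0 = 1 ∨ 2 ≤ D 0 := by omega
  · obtain ⟨j, rfl⟩ := hD.exists_eq_l_zero_sub_l_succ hD0
    exact ncard_exceptionalDecomps_l_zero_sub_l_succ j
  · obtain ⟨a, ha, hlt⟩ := hD.exists_isRoot_reflct_apply_zero_lt hr hD0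
    have hpos' := (isRuling_reflct ha hD).apply_zero_pos hr
    rw [← ncard_exceptionalDecomps_reflct ha]
    exact (isRuling_reflct ha hD).ncard_exceptionalDecomps hr
termination_by (D 0).toNat
decreasing_by omega

theorem stmt10_general (r : ℕ) (h2 : r ≤ 8) (D : Fin (r + 1) → ℤ)
    (hD : IsRuling D) :
    {s : Set (Fin (r + 1) → ℤ) | ∃ E F : Fin (r + 1) → ℤ,
      IsExc E ∧ IsExc F ∧ dpB E F = 1 ∧ E + F = D ∧ s = {E, F}}.ncard = r - 1 :=
  hD.ncard_exceptionalDecomps h2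

/-- Every ruling has exactly `r - 1` unordered decompositions into pairs of
exceptional classes meeting in one point. -/
theorem stmt10 (r : ℕ) (h1 : 4 ≤ r) (h2 : r ≤ 8) (D : Fin (r + 1) → ℤ)
    (hD : IsRuling D) :
    {s : Set (Fin (r + 1) → ℤ) | ∃ E F : Fin (r + 1) → ℤ,
      IsExc E ∧ IsExc F ∧ dpB E F = 1 ∧ E + F = D ∧ s = {E, F}}.ncard = r - 1 :=
  stmt10_general r h2 D hD
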